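/- If G is a group of type Φ_k, then every injective kG-module has finite projective dimension over kG. -/

import Mathlib

/-!
Background definitions.

Throughout, for a commutative ring `k` and a group `G`, the group algebra `kG` is
`MonoidAlgebra k G`, and `kG`-modules are (possibly infinitely generated) modules over
`MonoidAlgebra k G`.
-/

universe u v

open scoped TensorProduct DirectSum

/-- `M` has projective dimension at most `n` over `R` (i.e. it admits a projective
resolution of length at most `n`). -/
def HasProjDimLE (R : Type u) [Ring R] :
    (n : ℕ) → (M : Type v) → [AddCommMonoid M] → [Module R M] → Prop
  | 0, M, _, _ => Module.Projective R M
  | n + 1, M, _, _ =>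
    ∃ (P : Type v) (_ : AddCommMonoid P) (_ : Module R P) (f : P →ₗ[R] M),
      Module.Projective R P ∧ Function.Surjective f ∧
        HasProjDimLE R n (LinearMap.ker f)

/-- `M` has finite projective dimension over `R`. -/
def HasFinProjDim (R : Type u) [Ring R] (M : Type v) [AddCommMonoid M] [Module R M] : Prop :=
  ∃ n, HasProjDimLE R n M

/-- The global dimension of `R` is at most `d` : every `R`-module has projective dimension
at most `d`. -/
def GlobalDimLE (R : Type u) [Ring R] (d : ℕ) : Prop :=
  ∀ (M : Type u) (_ : AddCommMonoid M) (_ : Module R M), HasProjDimLE R d M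

section GroupAlgebra

variable (k : Type u) [CommRing k] (G : Type u) [Group G]

/-- The canonical ring homomorphism `kF → kG` induced by the inclusion of a subgroup `F ≤ G`. -/
noncomputable def subgroupInclusion (F : Subgroup G) :
    MonoidAlgebra k F →+* MonoidAlgebra k G :=
  MonoidAlgebra.mapDomainRingHom k F.subtype

/-- The restriction of a `kG`-module `M` to a `kF`-module, for a subgroup `F ≤ G`. -/
noncomputable def restrictToSubgroup (F : Subgroup G) (M : Type u) [AddCommMonoid M]
    [Module (MonoidAlgebra k G) M] : Module (MonoidAlgebra k F) M :=
  Module.compHom M (subgroupInclusion k G F)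

/-- A group `G` is of type `Φ_k` if a `kG`-module has finite projective dimension over `kG`
if and only if its restriction to every finite subgroup `F ≤ G` has finite projective
dimension over `kF`. -/
def IsTypePhi : Prop :=
  ∀ (M : Type u) (_ : AddCommMonoid M) (_ : Module (MonoidAlgebra k G) M),
    HasFinProjDim (MonoidAlgebra k G) M ↔
      ∀ (F : Subgroup G), Finite F →
        letI := restrictToSubgroup k G F M
        HasFinProjDim (MonoidAlgebra k F) M

/-- The finitistic dimension of `kG` is at most `b` : every `kG`-module of finite projective
dimension has projective dimension at most `b`. -/
def FindimLE (b : ℕ) : Prop :=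
  ∀ (M : Type u) (_ : AddCommMonoid M) (_ : Module (MonoidAlgebra k G) M),
    HasFinProjDim (MonoidAlgebra k G) M → HasProjDimLE (MonoidAlgebra k G) b M

/-- The trivial representation of `G` on `k`. -/
noncomputable abbrev trivRep : Representation k G k :=
  Representation.trivial k (G := G) (V := k)

/-- The trivial `kG`-module `k`. -/
noncomputable abbrev Triv : Type u := (trivRep k G).asModule

/-- `kG ⊗_{kH} k`, the module induced from the trivial `kH`-module `k`, realised as the
quotient of `kG` by the left submodule generated by `{h - 1 : h ∈ H}`, i.e. by
`kG · I_H` where `I_H` is the augmentation ideal of `kH`. -/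
noncomputable def IndTriv (H : Subgroup G) : Type u :=
  MonoidAlgebra k G ⧸ Submodule.span (MonoidAlgebra k G)
    {x : MonoidAlgebra k G | ∃ h ∈ H, x = MonoidAlgebra.of k G h - 1}

noncomputable instance (H : Subgroup G) : AddCommGroup (IndTriv k G H) :=
  inferInstanceAs (AddCommGroup (MonoidAlgebra k G ⧸ _))

noncomputable instance (H : Subgroup G) : Module (MonoidAlgebra k G) (IndTriv k G H) :=
  inferInstanceAs (Module (MonoidAlgebra k G) (MonoidAlgebra k G ⧸ _))

/-- The restriction of the `kG`-module `M` to the subgroup `H ≤ G` is projective over `kH`. -/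
noncomputable def RestrictionProjective (H : Subgroup G) (M : Type u) [AddCommMonoid M]
    [Module (MonoidAlgebra k G) M] : Prop :=
  letI := restrictToSubgroup k G H M
  Module.Projective (MonoidAlgebra k H) M

/-- `M` is a `kG`-lattice, i.e. `M` is projective as a `k`-module (where the `k`-module
structure is obtained by restricting scalars along `k → kG`). -/
noncomputable def IsLatticeModule (M : Type u) [AddCommMonoid M]
    [Module (MonoidAlgebra k G) M] : Prop :=
  letI : Module k M := Module.compHom M (algebraMap k (MonoidAlgebra k G))
  Module.Projective k M

/-- `kG`, viewed as a left `kH`-module via left multiplication, for a subgroup `H ≤ G`. -/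
noncomputable instance (H : Subgroup G) : Module (MonoidAlgebra k H) (MonoidAlgebra k G) :=
  Module.compHom _ (subgroupInclusion k G H)

/-- Right multiplication by `a : kG` as a `kH`-linear endomorphism of `kG`. -/
noncomputable def rightMulHom (H : Subgroup G) (a : MonoidAlgebra k G) :
    MonoidAlgebra k G →ₗ[MonoidAlgebra k H] MonoidAlgebra k G where
  toFun x := x * a
  map_add' x y := add_mul x y a
  map_smul' b x := by
    show (subgroupInclusion k G H b * x) * a = subgroupInclusion k G H b * (x * a)
    rw [mul_assoc]

/-- The `kG`-module structure on the coinduced module `Coind^G_H N = Hom_{kH}(kG, N)`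
(where `kG` is a left `kH`-module via left multiplication), given by `(a • φ) x = φ (x * a)`;
for `a = g ∈ G` this is `(g • φ) x = φ (x * g)`. -/
noncomputable instance coindModule (H : Subgroup G) (N : Type u) [AddCommGroup N]
    [Module (MonoidAlgebra k H) N] :
    Module (MonoidAlgebra k G) (MonoidAlgebra k G →ₗ[MonoidAlgebra k H] N) where
  smul a φ := LinearMap.comp φ (rightMulHom k G H a)
  one_smul φ := LinearMap.ext fun x => by
    show φ (x * 1) = φ x
    rw [mul_one]
  mul_smul a b φ := LinearMap.ext fun x => by
    show φ (x * (a * b)) = φ ((x * a) * b)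
    rw [mul_assoc]
  smul_zero a := LinearMap.ext fun x => rfl
  smul_add a φ ψ := LinearMap.ext fun x => rfl
  add_smul a b φ := LinearMap.ext fun x => by
    show φ (x * (a + b)) = φ (x * a) + φ (x * b)
    rw [mul_add, map_add]
  zero_smul φ := LinearMap.ext fun x => by
    show φ (x * 0) = 0
    rw [mul_zero, map_zero]

/-- The representation of `G` on the `k`-module of all functions `G → Y`, with
`(g • φ) x = φ (x * g)`; this is the module coinduced from the trivial subgroup,
`Coind^G_1 Y = Hom_k(kG, Y)`. -/
noncomputable def coindTrivRep (Y : Type u) [AddCommGroup Y] [Module k Y] :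
    Representation k G (G → Y) where
  toFun g :=
    { toFun := fun φ x => φ (x * g)
      map_add' := fun φ ψ => rfl
      map_smul' := fun r φ => rfl }
  map_one' := by ext φ x; simp
  map_mul' g h := by ext φ x; simp [mul_assoc]

end GroupAlgebra

/-- `C` is a direct summand of `S` as an `R`-module. -/
def IsSummandOf (R : Type u) [Ring R] (C : Type v) (S : Type v) [AddCommMonoid C] [Module R C]
    [AddCommMonoid S] [Module R S] : Prop :=
  ∃ (i : C →ₗ[R] S) (p : S →ₗ[R] C), p.comp i = LinearMap.id

/-- An `R`-module is Gorenstein projective if it is (isomorphic to) a kernel of a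
differential in a totally acyclic `ℤ`-indexed chain complex of projective `R`-modules,
i.e. an everywhere-exact complex `P_*` of projectives such that `Hom_R(P_*, Q)` is
everywhere exact for every projective `R`-module `Q`. -/
def IsGorensteinProjective (R : Type u) [Ring R] (M : Type u) [AddCommMonoid M]
    [Module R M] : Prop :=
  ∃ (P : ℤ → Type u) (_ : ∀ i, AddCommMonoid (P i)) (_ : ∀ i, Module R (P i))
    (d : ∀ i : ℤ, P (i + 1) →ₗ[R] P i),
      (∀ i, Module.Projective R (P i)) ∧
      (∀ i : ℤ, Function.Exact (d (i + 1)) (d i)) ∧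
      (∀ (Q : Type u) (_ : AddCommMonoid Q) (_ : Module R Q), Module.Projective R Q →
        ∀ i : ℤ, Function.Exact (fun f : P i →ₗ[R] Q => f.comp (d i))
          (fun f : P (i + 1) →ₗ[R] Q => f.comp (d (i + 1)))) ∧
      ∃ i : ℤ, Nonempty (M ≃ₗ[R] LinearMap.ker (d i))

/-- `A` is an `n`-th syzygy of `M` : there is an exact sequence
`0 → A → P_{n-1} → ⋯ → P_0 → M → 0` with all `P_i` projective (for `n = 0` read `A ≅ M`). -/
def IsSyzygy (R : Type u) [Ring R] :
    (n : ℕ) → (A : Type u) → [AddCommMonoid A] → [Module R A] →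
      (M : Type u) → [AddCommMonoid M] → [Module R M] → Prop
  | 0, A, _, _, M, _, _ => Nonempty (A ≃ₗ[R] M)
  | n + 1, A, _, _, M, _, _ =>
    ∃ (P : Type u) (_ : AddCommMonoid P) (_ : Module R P) (f : P →ₗ[R] M),
      Module.Projective R P ∧ Function.Surjective f ∧ IsSyzygy R n A (LinearMap.ker f)

/-- Two `R`-modules `M` and `N` are stably isomorphic : for some `n ≥ 0` there are `n`-th
syzygies `A` of `M` and `B` of `N`, and projective modules `P`, `Q`, with `A ⊕ P ≅ B ⊕ Q`. -/
def StablyIsomorphic (R : Type u) [Ring R] (M : Type u) [AddCommMonoid M] [Module R M]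
    (N : Type u) [AddCommMonoid N] [Module R N] : Prop :=
  ∃ (n : ℕ) (A B : Type u) (_ : AddCommMonoid A) (_ : Module R A)
    (_ : AddCommMonoid B) (_ : Module R B),
      IsSyzygy R n A M ∧ IsSyzygy R n B N ∧
      ∃ (P Q : Type u) (_ : AddCommMonoid P) (_ : Module R P) (_ : AddCommMonoid Q)
        (_ : Module R Q), Module.Projective R P ∧ Module.Projective R Q ∧
          Nonempty ((A × P) ≃ₗ[R] (B × Q))

/-- A homomorphism `f : A → B` of `R`-modules is a stable isomorphism : there are a projective
module `P` and a surjection `π : P → B` such that the kernel of the combined map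
`(f, π) : A ⊕ P → B` has finite projective dimension. -/
def IsStableIso (R : Type u) [Ring R] {A B : Type u} [AddCommMonoid A] [Module R A]
    [AddCommMonoid B] [Module R B] (f : A →ₗ[R] B) : Prop :=
  ∃ (P : Type u) (_ : AddCommMonoid P) (_ : Module R P) (π : P →ₗ[R] B),
    Module.Projective R P ∧ Function.Surjective π ∧
      HasFinProjDim R (LinearMap.ker (LinearMap.coprod f π))

section Equivariant

variable {k G V W : Type u} [CommRing k] [Group G]
  [AddCommGroup V] [Module k V] [AddCommGroup W] [Module k W]

/-- A `G`-equivariant `k`-linear map between representations induces a homomorphism of the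
corresponding modules over the group algebra `MonoidAlgebra k G`. -/
noncomputable def eqvToModule (ρ : Representation k G V) (σ : Representation k G W)
    (f : V →ₗ[k] W) (hf : ∀ (g : G) (v : V), f (ρ g v) = σ g (f v)) :
    ρ.asModule →ₗ[MonoidAlgebra k G] σ.asModule where
  toFun v := f v
  map_add' := f.map_add
  map_smul' a v := by
    show f (ρ.asAlgebraHom a v) = σ.asAlgebraHom a (f v)
    induction a using MonoidAlgebra.induction_on with
    | of g => simpa [Representation.asAlgebraHom_of] using hf g v
    | add a b ha hb =>
      simp only [map_add]
      erw [LinearMap.add_apply, LinearMap.add_apply]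
      rw [map_add, ha, hb]
    | smul r a ha =>
      simp only [map_smul]
      erw [LinearMap.smul_apply, LinearMap.smul_apply]
      rw [map_smul, ha]

theorem eval_equivariant (ρ : Representation k G V) (g : G) (v : V) :
    Module.Dual.eval k V (ρ g v) = ρ.dual.dual g (Module.Dual.eval k V v) := by
  ext φ
  simp [Representation.dual_apply, Module.Dual.transpose_apply]

/-- The natural map `M → M**` as a homomorphism of `kG`-modules. -/
noncomputable def evalHomG (ρ : Representation k G V) :
    ρ.asModule →ₗ[MonoidAlgebra k G] ρ.dual.dual.asModule :=
  eqvToModule ρ ρ.dual.dual (Module.Dual.eval k V) (eval_equivariant ρ)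

theorem ev_equivariant (ρ : Representation k G V) (g : G) (z : V ⊗[k] Module.Dual k V) :
    contractRight k V ((ρ.tprod ρ.dual) g z) =
      trivRep k G g (contractRight k V z) := by
  induction z using TensorProduct.induction_on with
  | zero => simp
  | tmul m φ =>
      simp [Representation.tprod_apply, contractRight_apply,
        Representation.dual_apply, Module.Dual.transpose_apply, Representation.trivial_apply,
        ← Module.End.mul_apply, ← map_mul]
  | add x y hx hy => simp only [map_add, hx, hy]

/-- The evaluation map `ev : M ⊗_k M* → k`, `m ⊗ φ ↦ φ m`, as a homomorphism of
`kG`-modules (where `M ⊗_k M*` carries the diagonal `G`-action and `k` is trivial). -/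
noncomputable def evHomG (ρ : Representation k G V) :
    (ρ.tprod ρ.dual).asModule →ₗ[MonoidAlgebra k G] Triv k G where
  toFun z := contractRight k V z
  map_add' := (contractRight k V).map_add
  map_smul' a z := by
    show contractRight k V ((ρ.tprod ρ.dual).asAlgebraHom a z) =
      (trivRep k G).asAlgebraHom a (contractRight k V z)
    induction a using MonoidAlgebra.induction_on with
    | of g => simpa [Representation.asAlgebraHom_of] using ev_equivariant ρ g z
    | add a b ha hb =>
      simp only [map_add]
      erw [LinearMap.add_apply, LinearMap.add_apply]
      rw [map_add, ha, hb]
    | smul r a ha =>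
      simp only [map_smul]
      erw [LinearMap.smul_apply, LinearMap.smul_apply]
      rw [map_smul, ha]

theorem theta_equivariant (ρ : Representation k G V) (g : G) (z : V ⊗[k] Module.Dual k V) :
    ((dualTensorHom k V V).comp (TensorProduct.comm k V (Module.Dual k V)).toLinearMap)
        ((ρ.tprod ρ.dual) g z) =
      (ρ.linHom ρ) g (((dualTensorHom k V V).comp
        (TensorProduct.comm k V (Module.Dual k V)).toLinearMap) z) := by
  induction z using TensorProduct.induction_on with
  | zero => simp
  | tmul m φ =>
      ext m'
      simp [Representation.tprod_apply, dualTensorHom_apply,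
        Representation.dual_apply, Module.Dual.transpose_apply]
  | add x y hx hy => simp only [map_add, hx, hy]

/-- The natural map `θ_M : M ⊗_k M* → End_k M`, `θ (m ⊗ φ) m' = φ m' • m`, as a
homomorphism of `kG`-modules (where `End_k M` carries the conjugation `G`-action). -/
noncomputable def thetaHomG (ρ : Representation k G V) :
    (ρ.tprod ρ.dual).asModule →ₗ[MonoidAlgebra k G] (ρ.linHom ρ).asModule where
  toFun z := ((dualTensorHom k V V).comp
    (TensorProduct.comm k V (Module.Dual k V)).toLinearMap) z
  map_add' x y := map_add _ x y
  map_smul' a z := by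
    show ((dualTensorHom k V V).comp (TensorProduct.comm k V (Module.Dual k V)).toLinearMap)
        ((ρ.tprod ρ.dual).asAlgebraHom a z) =
      (ρ.linHom ρ).asAlgebraHom a (((dualTensorHom k V V).comp
        (TensorProduct.comm k V (Module.Dual k V)).toLinearMap) z)
    induction a using MonoidAlgebra.induction_on with
    | of g => simpa [Representation.asAlgebraHom_of] using theta_equivariant ρ g z
    | add a b ha hb =>
      simp only [map_add]
      erw [LinearMap.add_apply, LinearMap.add_apply]
      rw [map_add, ha, hb]
    | smul r a ha =>
      simp only [map_smul]
      erw [LinearMap.smul_apply, LinearMap.smul_apply]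
      rw [map_smul, ha]

/-- A representation is invertible (endotrivial) if there is a `kG`-module `N` such that
`M ⊗_k N` (with the diagonal `G`-action) is stably isomorphic to the trivial module `k`. -/
def IsInvertibleRep (ρ : Representation k G V) : Prop :=
  ∃ (W' : Type u) (_ : AddCommMonoid W') (_ : Module k W') (σ : Representation k G W'),
    StablyIsomorphic (MonoidAlgebra k G) (ρ.tprod σ).asModule (Triv k G)

end Equivariant

section MapCoeff

variable (k : Type u) [CommRing k] (l : Type u) [CommRing l] (G : Type u) [Group G]

/-- The ring homomorphism `kG → ℓG` induced by a ring homomorphism `f : k → ℓ`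
(applying `f` to the coefficients). -/
noncomputable def mapCoeffRingHom (f : k →+* l) :
    MonoidAlgebra k G →+* MonoidAlgebra l G :=
  letI : Algebra k l := f.toAlgebra
  ((MonoidAlgebra.lift k (MonoidAlgebra l G) G) (MonoidAlgebra.of l G)).toRingHom

end MapCoeff

section BaseChange

variable {k : Type u} [CommRing k] {G : Type u} [Group G]
  {V : Type u} [AddCommGroup V] [Module k V]
  (A : Type u) [CommRing A] [Algebra k A]

/-- The base change `A ⊗_k V` of a representation along `k → A`. -/
noncomputable def repBaseChange (ρ : Representation k G V) :
    Representation A G (A ⊗[k] V) where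
  toFun g := LinearMap.baseChange A (ρ g)
  map_one' := by ext; simp
  map_mul' g h := by ext; simp

end BaseChange


section Aux

section PD

variable {R : Type u} [Ring R]

theorem myProjective_of_subsingleton (A : Type v) [AddCommMonoid A] [Module R A]
    [Subsingleton A] : Module.Projective R A :=
  Module.projective_def'.mpr ⟨0, by ext x; exact Subsingleton.elim _ _⟩

theorem myPD_of_equiv : ∀ (n : ℕ) {A B : Type v} [AddCommMonoid A] [Module R A]
    [AddCommMonoid B] [Module R B] (_ : A ≃ₗ[R] B),
    HasProjDimLE R n A → HasProjDimLE R n B := by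
  intro n
  induction n with
  | zero =>
    intro A B _ _ _ _ e h
    haveI : Module.Projective R A := h
    exact Module.Projective.of_equiv e
  | succ n ih =>
    rintro A B _ _ _ _ e ⟨P, _, _, f, hP, hf, hK⟩
    refine ⟨P, _, _, e.toLinearMap.comp f, hP, fun b => ?_, ?_⟩
    · obtain ⟨p, hp⟩ := hf (e.symm b)
      exact ⟨p, by simp [hp]⟩
    · have hker : LinearMap.ker (e.toLinearMap.comp f) = LinearMap.ker f := by
        ext x
        simp [LinearMap.mem_ker]
      exact ih (LinearEquiv.ofEq _ _ hker.symm) hK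

theorem myPD_of_projective : ∀ (n : ℕ) {A : Type v} [AddCommMonoid A] [Module R A],
    Module.Projective R A → HasProjDimLE R n A := by
  intro n
  induction n with
  | zero => intro A _ _ h; exact h
  | succ n ih =>
    intro A _ _ h
    refine ⟨A, _, _, LinearMap.id, h, Function.surjective_id, ?_⟩
    have : Subsingleton (LinearMap.ker (LinearMap.id (R := R) (M := A))) := by
      constructor
      rintro ⟨a, ha⟩ ⟨b, hb⟩
      simp only [LinearMap.mem_ker, LinearMap.id_apply] at ha hb
      simp [Subtype.ext_iff, ha, hb]
    exact ih (myProjective_of_subsingleton _)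

/-- kernel of prodMap equiv -/
noncomputable def kerProdMapEquiv {A B C D : Type v} [AddCommMonoid A] [Module R A]
    [AddCommMonoid B] [Module R B] [AddCommMonoid C] [Module R C] [AddCommMonoid D]
    [Module R D] (f : A →ₗ[R] B) (g : C →ₗ[R] D) :
    (LinearMap.ker (f.prodMap g)) ≃ₗ[R] (LinearMap.ker f × LinearMap.ker g) where
  toFun x := (⟨x.1.1, congrArg Prod.fst x.2⟩, ⟨x.1.2, congrArg Prod.snd x.2⟩)
  map_add' x y := rfl
  map_smul' r x := rfl
  invFun y := ⟨(y.1.1, y.2.1), by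
    have h1 : f y.1.1 = 0 := y.1.2
    have h2 : g y.2.1 = 0 := y.2.2
    simp [LinearMap.mem_ker, h1, h2, Prod.ext_iff]⟩
  left_inv x := rfl
  right_inv y := rfl

theorem myPD_prod (n : ℕ) {A B : Type v} [AddCommMonoid A] [Module R A]
    [AddCommMonoid B] [Module R B] (hA : HasProjDimLE R n A) (hB : HasProjDimLE R n B) :
    HasProjDimLE R n (A × B) := by
  induction n generalizing A B with
  | zero =>
    haveI : Module.Projective R A := hA
    haveI : Module.Projective R B := hB
    exact (inferInstance : Module.Projective R (A × B))
  | succ n ih =>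
    obtain ⟨P, _, _, f, hP, hf, hK⟩ := hA
    obtain ⟨Q, _, _, g, hQ, hg, hL⟩ := hB
    haveI := hP; haveI := hQ
    refine ⟨P × Q, _, _, f.prodMap g, inferInstance, hf.prodMap hg, ?_⟩
    exact myPD_of_equiv n (kerProdMapEquiv f g).symm (ih hK hL)

end PD

section Split

variable {R : Type u} [Ring R]

/-- A split surjection decomposes the middle as kernel × base. -/
noncomputable def splitEquiv {X A : Type v} [AddCommGroup X] [Module R X]
    [AddCommGroup A] [Module R A] (π : X →ₗ[R] A) (σ : A →ₗ[R] X)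
    (h : π.comp σ = LinearMap.id) : X ≃ₗ[R] (LinearMap.ker π × A) where
  toFun x := (⟨x - σ (π x), by
    have := congrArg (fun f => f (π x)) h
    simp only [LinearMap.comp_apply, LinearMap.id_apply] at this
    rw [LinearMap.mem_ker, map_sub, this, sub_self]⟩, π x)
  map_add' x y := by
    ext
    · show (x + y) - σ (π (x + y)) = (x - σ (π x)) + (y - σ (π y))
      rw [map_add, map_add]; abel
    · simp
  map_smul' r x := by
    ext
    · show (r • x) - σ (π (r • x)) = r • (x - σ (π x))
      rw [map_smul, map_smul, smul_sub]
    · simp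
  invFun y := y.1.1 + σ y.2
  left_inv x := by simp
  right_inv y := by
    have hy : π y.1.1 = 0 := y.1.2
    have hσ : π (σ y.2) = y.2 := by
      have := congrArg (fun f => f y.2) h
      simpa using this
    ext
    · show (y.1.1 + σ y.2) - σ (π (y.1.1 + σ y.2)) = y.1.1
      simp [map_add, hy, hσ]
    · show π (y.1.1 + σ y.2) = y.2
      simp [map_add, hy, hσ]

private noncomputable def schanuelX {M P P' : Type v} [AddCommGroup M] [Module R M]
    [AddCommGroup P] [Module R P] [AddCommGroup P'] [Module R P']
    (f : P →ₗ[R] M) (f' : P' →ₗ[R] M) : Submodule R (P × P') :=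
  LinearMap.ker (f.comp (LinearMap.fst R P P') - f'.comp (LinearMap.snd R P P'))

private theorem mem_schanuelX {M P P' : Type v} [AddCommGroup M] [Module R M]
    [AddCommGroup P] [Module R P] [AddCommGroup P'] [Module R P']
    (f : P →ₗ[R] M) (f' : P' →ₗ[R] M) (x : P × P') :
    x ∈ schanuelX f f' ↔ f x.1 = f' x.2 := by
  simp [schanuelX, LinearMap.mem_ker, sub_eq_zero]

private noncomputable def schanuelAux {M P P' : Type v} [AddCommGroup M] [Module R M]
    [AddCommGroup P] [Module R P] [AddCommGroup P'] [Module R P']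
    (f : P →ₗ[R] M) (f' : P' →ₗ[R] M) (hP' : Module.Projective R P')
    (hf : Function.Surjective f) :
    (schanuelX f f') ≃ₗ[R] (LinearMap.ker f × P') := by
  classical
  let π : (schanuelX f f') →ₗ[R] P' := (LinearMap.snd R P P').comp (schanuelX f f').subtype
  have hπ : Function.Surjective π := by
    intro p'
    obtain ⟨p, hp⟩ := hf (f' p')
    exact ⟨⟨(p, p'), (mem_schanuelX f f' _).mpr hp⟩, rfl⟩
  have hex := Module.projective_lifting_property (R := R) π LinearMap.id hπ
  let σ := hex.choose
  have hσ : π.comp σ = LinearMap.id := hex.choose_spec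
  refine (splitEquiv π σ hσ).trans (LinearEquiv.prodCongr ?_ (LinearEquiv.refl R P'))
  -- ker π ≃ ker f
  exact
  { toFun := fun y => ⟨y.1.1.1, by
      have h1 : f y.1.1.1 = f' y.1.1.2 := (mem_schanuelX f f' _).mp y.1.2
      have h2 : y.1.1.2 = 0 := y.2
      simp [LinearMap.mem_ker, h1, h2]⟩
    map_add' := fun a b => rfl
    map_smul' := fun r a => rfl
    invFun := fun z => ⟨⟨(z.1, 0), by
        have : f z.1 = 0 := z.2
        simp [mem_schanuelX, this]⟩, rfl⟩
    left_inv := fun y => by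
      apply Subtype.ext; apply Subtype.ext
      have h2 : y.1.1.2 = 0 := y.2
      exact Prod.ext rfl h2.symm
    right_inv := fun z => rfl }

private noncomputable def schanuelSwap {M P P' : Type v} [AddCommGroup M] [Module R M]
    [AddCommGroup P] [Module R P] [AddCommGroup P'] [Module R P']
    (f : P →ₗ[R] M) (f' : P' →ₗ[R] M) :
    (schanuelX f f') ≃ₗ[R] (schanuelX f' f) where
  toFun x := ⟨(x.1.2, x.1.1), by
    have := (mem_schanuelX f f' _).mp x.2
    exact (mem_schanuelX f' f _).mpr this.symm⟩
  map_add' x y := rfl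
  map_smul' r x := rfl
  invFun x := ⟨(x.1.2, x.1.1), by
    have := (mem_schanuelX f' f _).mp x.2
    exact (mem_schanuelX f f' _).mpr this.symm⟩
  left_inv x := rfl
  right_inv x := rfl

theorem schanuel {M P P' : Type v} [AddCommGroup M] [Module R M]
    [AddCommGroup P] [Module R P] [AddCommGroup P'] [Module R P']
    (f : P →ₗ[R] M) (f' : P' →ₗ[R] M) (hP : Module.Projective R P)
    (hP' : Module.Projective R P') (hf : Function.Surjective f)
    (hf' : Function.Surjective f') :
    Nonempty ((LinearMap.ker f × P') ≃ₗ[R] (LinearMap.ker f' × P)) :=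
  ⟨((schanuelAux f f' hP' hf).symm.trans (schanuelSwap f f')).trans
    (schanuelAux f' f hP hf')⟩

end Split

section Summand

variable {R : Type u} [Ring R]

theorem myPD_fst : ∀ (n : ℕ) {A B : Type u} [AddCommMonoid A] [Module R A]
    [AddCommMonoid B] [Module R B],
    HasProjDimLE R n (A × B) → HasProjDimLE R n A := by
  intro n
  induction n with
  | zero =>
    intro A B _ _ _ _ h
    haveI : Module.Projective R (A × B) := h
    exact Module.Projective.of_split (LinearMap.inl R A B) (LinearMap.fst R A B) (by ext; rfl)
  | succ n ih =>
    intro A B _ _ _ _ h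
    obtain ⟨P, _, _, f, hP, hf, hK⟩ := h
    letI : AddCommGroup P := Module.addCommMonoidToAddCommGroup R
    letI : AddCommGroup A := Module.addCommMonoidToAddCommGroup R
    letI : AddCommGroup B := Module.addCommMonoidToAddCommGroup R
    let tA : (A →₀ R) →ₗ[R] A := Finsupp.linearCombination R id
    have htA : Function.Surjective tA :=
      Finsupp.linearCombination_surjective R Function.surjective_id
    let tB : (B →₀ R) →ₗ[R] B := Finsupp.linearCombination R id
    have htB : Function.Surjective tB :=
      Finsupp.linearCombination_surjective R Function.surjective_id
    let g : ((A →₀ R) × (B →₀ R)) →ₗ[R] A × B := tA.prodMap tB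
    have hg : Function.Surjective g := htA.prodMap htB
    obtain ⟨e⟩ := schanuel f g hP inferInstance hf hg
    -- pd (ker f × (FA × FB)) ≤ n
    have h1 : HasProjDimLE R n (LinearMap.ker f × ((A →₀ R) × (B →₀ R))) :=
      myPD_prod n hK (myPD_of_projective n inferInstance)
    have h2 : HasProjDimLE R n (LinearMap.ker g × P) := myPD_of_equiv n e h1
    have h3 : HasProjDimLE R n ((LinearMap.ker tA × LinearMap.ker tB) × P) :=
      myPD_of_equiv n ((kerProdMapEquiv tA tB).prodCongr (LinearEquiv.refl R P)) h2
    have h4 : HasProjDimLE R n (LinearMap.ker tA × (LinearMap.ker tB × P)) :=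
      myPD_of_equiv n (LinearEquiv.prodAssoc R _ _ _) h3
    have h5 : HasProjDimLE R n (LinearMap.ker tA) := ih h4
    exact ⟨A →₀ R, _, _, tA, inferInstance, htA, h5⟩

theorem myPD_of_retract {A B : Type u} [AddCommMonoid A] [Module R A]
    [AddCommGroup B] [Module R B] (i : A →ₗ[R] B) (p : B →ₗ[R] A)
    (h : p.comp i = LinearMap.id) (n : ℕ) (hB : HasProjDimLE R n B) :
    HasProjDimLE R n A := by
  letI : AddCommGroup A := Module.addCommMonoidToAddCommGroup R
  have e : B ≃ₗ[R] (LinearMap.ker p × A) := splitEquiv p i h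
  have h1 : HasProjDimLE R n (LinearMap.ker p × A) := myPD_of_equiv n e hB
  have h2 : HasProjDimLE R n (A × LinearMap.ker p) :=
    myPD_of_equiv n (LinearEquiv.prodComm R _ _) h1
  exact myPD_fst n h2

end Summand

section BC

variable {k : Type u} [CommRing k] (A : Type u) [Ring A] [Algebra k A] [Module.Flat k A]

theorem myPD_baseChange : ∀ (n : ℕ) (N : Type u) [AddCommMonoid N] [Module k N],
    HasProjDimLE k n N → HasProjDimLE A n (A ⊗[k] N) := by
  intro n
  induction n with
  | zero =>
    intro N _ _ h
    haveI : Module.Projective k N := h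
    exact (inferInstance : Module.Projective A (A ⊗[k] N))
  | succ n ih =>
    intro N _ _ h
    obtain ⟨P, _, _, f, hP, hf, hK⟩ := h
    haveI : Module.Projective k P := hP
    refine ⟨A ⊗[k] P, _, _, f.baseChange A, inferInstance, ?_, ?_⟩
    · have heq : ⇑(f.baseChange A) = ⇑(f.lTensor A) := LinearMap.baseChange_eq_ltensor f
      rw [heq]
      exact LinearMap.lTensor_surjective A hf
    · -- kernel is A ⊗ ker f
      letI : AddCommGroup P := Module.addCommMonoidToAddCommGroup k
      letI : AddCommGroup N := Module.addCommMonoidToAddCommGroup k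
      set ι := (LinearMap.ker f).subtype with hιdef
      have hbcι : ⇑(ι.baseChange A) = ⇑(ι.lTensor A) := LinearMap.baseChange_eq_ltensor ι
      have hbcf : ⇑(f.baseChange A) = ⇑(f.lTensor A) := LinearMap.baseChange_eq_ltensor f
      have hι : Function.Injective ⇑(ι.lTensor A) :=
        Module.Flat.lTensor_preserves_injective_linearMap ι (Submodule.injective_subtype _)
      have hexact : Function.Exact ⇑(ι.lTensor A) ⇑(f.lTensor A) :=
        Module.Flat.lTensor_exact A (LinearMap.exact_subtype_ker_map f)
      have hinj : Function.Injective ⇑(ι.baseChange A) := by rw [hbcι]; exact hι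
      have hrange : LinearMap.range (ι.baseChange A) = LinearMap.ker (f.baseChange A) := by
        ext x
        simp only [LinearMap.mem_range, LinearMap.mem_ker]
        constructor
        · rintro ⟨y, rfl⟩
          have h0 : (f.lTensor A) ((ι.lTensor A) y) = 0 := hexact.apply_apply_eq_zero y
          rw [show (ι.baseChange A) y = (ι.lTensor A) y from congrFun hbcι y,
            show ∀ z, (f.baseChange A) z = (f.lTensor A) z from fun z => congrFun hbcf z]
          exact h0
        · intro hx
          have hx' : (f.lTensor A) x = 0 := by rw [← congrFun hbcf x]; exact hx
          obtain ⟨y, hy⟩ := (hexact x).mp hx'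
          exact ⟨y, by rw [congrFun hbcι y]; exact hy⟩
      have e : (A ⊗[k] (LinearMap.ker f)) ≃ₗ[A] (LinearMap.ker (f.baseChange A)) :=
        (LinearEquiv.ofInjective (ι.baseChange A) hinj).trans
          (LinearEquiv.ofEq _ _ hrange)
      exact myPD_of_equiv n e (ih (LinearMap.ker f) hK)

end BC


end Aux


section MainAux

section CoindEquiv

variable (k : Type u) [CommRing k] (G : Type u) [Group G]

/-- the canonical representative element of `F` attached to `g`. -/
noncomputable def cosetElt (F : Subgroup G) (g : G) : F :=
  ⟨g⁻¹ * (QuotientGroup.mk g : G ⧸ F).out,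
    QuotientGroup.eq.mp (QuotientGroup.out_eq' (QuotientGroup.mk g : G ⧸ F)).symm⟩

theorem cosetElt_spec (F : Subgroup G) (g : G) :
    (QuotientGroup.mk g : G ⧸ F).out * ((cosetElt G F g)⁻¹ : F) = g := by
  show ((QuotientGroup.mk g : G ⧸ F).out : G) * (g⁻¹ * (QuotientGroup.mk g : G ⧸ F).out)⁻¹ = g
  group

theorem cosetElt_mul (F : Subgroup G) (g : G) (f : F) :
    cosetElt G F (g * f) = f⁻¹ * cosetElt G F g := by
  have hq : (QuotientGroup.mk (g * f) : G ⧸ F) = QuotientGroup.mk g :=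
    QuotientGroup.mk_mul_of_mem g f.2
  apply Subtype.ext
  show (g * (f : G))⁻¹ * (QuotientGroup.mk (g * (f : G)) : G ⧸ F).out
    = (f : G)⁻¹ * (g⁻¹ * (QuotientGroup.mk g : G ⧸ F).out)
  rw [hq]
  group

theorem cosetElt_out_mul (F : Subgroup G) (c : G ⧸ F) (f : F) :
    cosetElt G F (c.out * f) = f⁻¹ := by
  have h := cosetElt_mul G F c.out f
  rw [h]
  have : cosetElt G F c.out = 1 := by
    apply Subtype.ext
    show c.out⁻¹ * (QuotientGroup.mk c.out : G ⧸ F).out = 1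
    rw [QuotientGroup.out_eq' c]
    group
  rw [this, mul_one]

theorem quot_out_mul_mem (F : Subgroup G) (c : G ⧸ F) (f : F) :
    (QuotientGroup.mk ((c.out : G) * f) : G ⧸ F) = c := by
  rw [QuotientGroup.mk_mul_of_mem _ f.2, QuotientGroup.out_eq' c]

end CoindEquiv

section BigEquiv

variable (k : Type u) [CommRing k] (G : Type u) [Group G]

theorem coindRestrictEquiv_nonempty (F : Subgroup G) [Fintype F] (V : Type u)
    [AddCommGroup V] [Module k V] :
    letI := restrictToSubgroup k G F ((coindTrivRep k G V).asModule)
    Nonempty ((MonoidAlgebra k F ⊗[k] ((G ⧸ F) → V)) ≃ₗ[MonoidAlgebra k F]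
      (coindTrivRep k G V).asModule) := by
  classical
  letI := restrictToSubgroup k G F ((coindTrivRep k G V).asModule)
  have smul_res : ∀ (a : MonoidAlgebra k F) (φ : (coindTrivRep k G V).asModule),
      a • φ = (coindTrivRep k G V).asAlgebraHom (subgroupInclusion k G F a) φ :=
    fun a φ => rfl
  have smul_of : ∀ (g' : G) (φ : G → V),
      (coindTrivRep k G V).asAlgebraHom (MonoidAlgebra.of k G g') φ
        = fun x => φ (x * g') := by
    intro g' φ
    rw [Representation.asAlgebraHom_of]
    rfl
  have incl_single : ∀ (f : F) (r : k),
      subgroupInclusion k G F (MonoidAlgebra.single f r) = MonoidAlgebra.single (f : G) r :=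
    fun f r => MonoidAlgebra.mapDomain_single
  -- the bilinear map
  let bil : MonoidAlgebra k F →ₗ[k] ((G ⧸ F) → V) →ₗ[k] (G → V) :=
    { toFun := fun a =>
        { toFun := fun ν => fun g => a.coeff (cosetElt G F g) • ν (QuotientGroup.mk g)
          map_add' := by
            intro ν ν'; funext g
            show _ • (ν + ν') _ = _
            rw [Pi.add_apply, smul_add]
            rfl
          map_smul' := by
            intro r ν; funext g
            show _ • (r • ν) _ = _
            rw [Pi.smul_apply, smul_comm]
            rfl }
      map_add' := by
        intro a a'; ext ν g
        show (a + a').coeff (cosetElt G F g) • ν _ = a.coeff (cosetElt G F g) • ν _ + a'.coeff (cosetElt G F g) • ν _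
        rw [MonoidAlgebra.coeff_add, Finsupp.add_apply, add_smul]
      map_smul' := by
        intro r a; ext ν g
        show (r • a).coeff (cosetElt G F g) • ν _ = r • (a.coeff (cosetElt G F g) • ν _)
        rw [MonoidAlgebra.coeff_smul, Finsupp.smul_apply, smul_eq_mul, mul_smul] }
  let L0 : (MonoidAlgebra k F ⊗[k] ((G ⧸ F) → V)) →ₗ[k] (G → V) := TensorProduct.lift bil
  have L0_tmul : ∀ (b : MonoidAlgebra k F) (ν : (G ⧸ F) → V),
      L0 (b ⊗ₜ[k] ν) = fun g => b.coeff (cosetElt G F g) • ν (QuotientGroup.mk g) :=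
    fun b ν => rfl
  -- the inverse function
  let inv : (G → V) → (MonoidAlgebra k F ⊗[k] ((G ⧸ F) → V)) := fun ψ =>
    ∑ f : F, (MonoidAlgebra.single f⁻¹ (1 : k) : MonoidAlgebra k F)
      ⊗ₜ[k] (fun c : G ⧸ F => ψ ((c.out : G) * (f : G)))
  have key : ∀ (b : MonoidAlgebra k F) (ν : (G ⧸ F) → V), inv (L0 (b ⊗ₜ[k] ν)) = b ⊗ₜ[k] ν := by
    intro b ν
    have h1 : ∀ (f : F), (fun c : G ⧸ F => (L0 (b ⊗ₜ[k] ν)) ((c.out : G) * (f : G)))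
        = (b.coeff f⁻¹) • ν := by
      intro f
      funext c
      rw [L0_tmul]
      show b.coeff (cosetElt G F ((c.out : G) * (f : G)))
          • ν (QuotientGroup.mk ((c.out : G) * (f : G))) = _
      rw [cosetElt_out_mul, quot_out_mul_mem]
      rfl
    show (∑ f : F, (MonoidAlgebra.single f⁻¹ (1 : k) : MonoidAlgebra k F)
      ⊗ₜ[k] (fun c : G ⧸ F => (L0 (b ⊗ₜ[k] ν)) ((c.out : G) * (f : G)))) = b ⊗ₜ[k] ν
    calc (∑ f : F, (MonoidAlgebra.single f⁻¹ (1 : k) : MonoidAlgebra k F)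
        ⊗ₜ[k] (fun c : G ⧸ F => (L0 (b ⊗ₜ[k] ν)) ((c.out : G) * (f : G))))
        = ∑ f : F, (MonoidAlgebra.single f⁻¹ (b.coeff f⁻¹) : MonoidAlgebra k F) ⊗ₜ[k] ν := by
          refine Finset.sum_congr rfl fun f _ => ?_
          rw [h1, TensorProduct.tmul_smul, TensorProduct.smul_tmul', MonoidAlgebra.smul_single',
            mul_one]
      _ = (∑ f : F, (MonoidAlgebra.single f⁻¹ (b.coeff f⁻¹) : MonoidAlgebra k F)) ⊗ₜ[k] ν := by
          rw [TensorProduct.sum_tmul]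
      _ = b ⊗ₜ[k] ν := by
          congr 1
          have h2 : (∑ f : F, (MonoidAlgebra.single f⁻¹ (b.coeff f⁻¹) : MonoidAlgebra k F))
              = ∑ f : F, (MonoidAlgebra.single f (b.coeff f) : MonoidAlgebra k F) :=
            Equiv.sum_comp (Equiv.inv F) (fun f => (MonoidAlgebra.single f (b.coeff f) : MonoidAlgebra k F))
          rw [h2, ← Finsupp.sum_fintype b.coeff (fun f r => MonoidAlgebra.single f r) (by simp),
            MonoidAlgebra.sum_coeff_single]
  have inv_add : ∀ ψ ψ' : G → V, inv (ψ + ψ') = inv ψ + inv ψ' := by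
    intro ψ ψ'
    rw [← Finset.sum_add_distrib]
    refine Finset.sum_congr rfl fun f _ => ?_
    rw [← TensorProduct.tmul_add]
    rfl
  refine ⟨{ toFun := fun z => L0 z
            map_add' := map_add L0
            invFun := inv
            left_inv := ?_
            right_inv := ?_
            map_smul' := ?_ }⟩
  · -- A-linearity
    have main : ∀ (a : MonoidAlgebra k F) (z : MonoidAlgebra k F ⊗[k] ((G ⧸ F) → V)),
        L0 (a • z)
          = (coindTrivRep k G V).asAlgebraHom (subgroupInclusion k G F a) (L0 z) := by
      intro a z
      induction z using TensorProduct.induction_on with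
      | zero => rw [smul_zero, map_zero, map_zero]
      | add x y hx hy => rw [smul_add, map_add, hx, hy, map_add, map_add]
      | tmul b ν =>
          induction a using MonoidAlgebra.induction_on with
          | of f =>
              rw [TensorProduct.smul_tmul']
              have hsm : (MonoidAlgebra.of k F f) • b = MonoidAlgebra.of k F f * b := rfl
              rw [hsm]
              have hincl : subgroupInclusion k G F (MonoidAlgebra.of k F f)
                  = MonoidAlgebra.of k G (f : G) := MonoidAlgebra.mapDomain_single
              rw [hincl, smul_of, L0_tmul, L0_tmul]
              funext g
              show (MonoidAlgebra.of k F f * b).coeff (cosetElt G F g) • ν (QuotientGroup.mk g)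
                = b.coeff (cosetElt G F (g * ((f : F) : G)))
                  • ν (QuotientGroup.mk (g * ((f : F) : G)))
              rw [MonoidAlgebra.of_apply, MonoidAlgebra.coeff_single_mul_apply, one_mul,
                cosetElt_mul, QuotientGroup.mk_mul_of_mem g f.2]
          | add a a' ha ha' =>
              rw [add_smul, map_add, ha, ha', map_add, map_add, LinearMap.add_apply]
          | smul r a ha =>
              have hts : (r • a) • (b ⊗ₜ[k] ν) = r • (a • (b ⊗ₜ[k] ν)) := smul_assoc r a _
              rw [hts, map_smul, ha]
              have hmd : subgroupInclusion k G F (r • a)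
                  = r • subgroupInclusion k G F a := MonoidAlgebra.mapDomain_smul _ _ _
              rw [hmd, map_smul, LinearMap.smul_apply]
    intro a z
    exact (main a z).trans (smul_res a (L0 z)).symm
  · -- left inverse
    intro z
    induction z using TensorProduct.induction_on with
    | zero =>
        show inv (L0 0) = 0
        rw [map_zero]
        refine Finset.sum_eq_zero fun f _ => ?_
        rw [show (fun c : G ⧸ F => (0 : G → V) ((c.out : G) * ((f : F) : G)))
          = (0 : (G ⧸ F) → V) from rfl, TensorProduct.tmul_zero]
    | tmul b ν => exact key b ν
    | add x y hx hy =>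
        have hx' : inv (L0 x) = x := hx
        have hy' : inv (L0 y) = y := hy
        show inv (L0 (x + y)) = x + y
        rw [map_add, inv_add, hx', hy']
  · -- right inverse
    intro ψ
    show L0 (inv ψ) = ψ
    rw [map_sum]
    funext g
    rw [Finset.sum_apply]
    have h3 : ∀ f : F, (L0 ((MonoidAlgebra.single f⁻¹ (1 : k) : MonoidAlgebra k F)
        ⊗ₜ[k] (fun c : G ⧸ F => ψ ((c.out : G) * (f : G))))) g
        = if f = (cosetElt G F g)⁻¹
            then ψ (((QuotientGroup.mk g : G ⧸ F).out : G) * ((f : F) : G)) else 0 := by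
      intro f
      rw [L0_tmul]
      show (MonoidAlgebra.single f⁻¹ (1 : k)).coeff (cosetElt G F g)
          • ψ (((QuotientGroup.mk g : G ⧸ F).out : G) * (f : G)) = _
      rw [MonoidAlgebra.coeff_single_apply]
      by_cases h : f = (cosetElt G F g)⁻¹
      · subst h; simp
      · have : ¬ (f⁻¹ = cosetElt G F g) := by
          intro hc; exact h (by rw [← hc]; simp)
        simp [this, h]
    calc (∑ f : F, (L0 ((MonoidAlgebra.single f⁻¹ (1 : k) : MonoidAlgebra k F)
          ⊗ₜ[k] (fun c : G ⧸ F => ψ ((c.out : G) * (f : G))))) g)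
        = ∑ f : F, if f = (cosetElt G F g)⁻¹
            then ψ (((QuotientGroup.mk g : G ⧸ F).out : G) * ((f : F) : G)) else 0 :=
          Finset.sum_congr rfl fun f _ => h3 f
      _ = ψ (((QuotientGroup.mk g : G ⧸ F).out : G) * (((cosetElt G F g)⁻¹ : F) : G)) := by
          rw [Finset.sum_ite_eq' Finset.univ ((cosetElt G F g)⁻¹)
            (fun f => ψ (((QuotientGroup.mk g : G ⧸ F).out : G) * ((f : F) : G)))]
          simp
      _ = ψ g := by rw [cosetElt_spec]

end BigEquiv

end MainAux

/-- If `G` is a group of type `Φ_k`, then every injective `kG`-module has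
finite projective dimension over `kG`. -/
theorem injective_hasFinProjDim_of_isTypePhi
    (k : Type u) [CommRing k] [IsNoetherianRing k] (hk : ∃ d, GlobalDimLE k d)
    (G : Type u) [Group G] (hG : IsTypePhi k G)
    (M : Type u) [AddCommGroup M] [Module (MonoidAlgebra k G) M]
    (hM : Module.Injective (MonoidAlgebra k G) M) :
    HasFinProjDim (MonoidAlgebra k G) M := by
  classical
  obtain ⟨d, hd⟩ := hk
  refine (hG M inferInstance inferInstance).mpr ?_
  intro F hF
  letI : Fintype F := Fintype.ofFinite F
  letI : Module k M := Module.compHom M (algebraMap k (MonoidAlgebra k G))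
  letI : AddCommGroup ((coindTrivRep k G M).asModule) :=
    inferInstanceAs (AddCommGroup (G → M))
  -- the unit map into the coinduced module
  let ι : M →ₗ[MonoidAlgebra k G] (coindTrivRep k G M).asModule :=
    { toFun := fun m => (fun g => MonoidAlgebra.of k G g • m : G → M)
      map_add' := by intro m m'; funext g; exact smul_add _ m m'
      map_smul' := by
        intro a m
        show (fun g => MonoidAlgebra.of k G g • (a • m))
          = (coindTrivRep k G M).asAlgebraHom a (fun g => MonoidAlgebra.of k G g • m)
        induction a using MonoidAlgebra.induction_on with
        | of g' =>
            rw [Representation.asAlgebraHom_of]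
            funext x
            show MonoidAlgebra.of k G x • (MonoidAlgebra.of k G g' • m)
              = MonoidAlgebra.of k G (x * g') • m
            rw [← mul_smul, ← map_mul]
        | add a b ha hb =>
            rw [map_add]
            funext x
            have hax := congrFun ha x
            have hbx := congrFun hb x
            show MonoidAlgebra.of k G x • ((a + b) • m) = _
            rw [add_smul, smul_add]
            show MonoidAlgebra.of k G x • (a • m) + MonoidAlgebra.of k G x • (b • m)
              = ((coindTrivRep k G M).asAlgebraHom a (fun g => MonoidAlgebra.of k G g • m)
                + (coindTrivRep k G M).asAlgebraHom b
                  (fun g => MonoidAlgebra.of k G g • m)) x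
            rw [Pi.add_apply]
            exact congrArg₂ (· + ·) hax hbx
        | smul r a ha =>
            rw [map_smul]
            funext x
            have hax := congrFun ha x
            show MonoidAlgebra.of k G x • ((r • a) • m)
              = (r • (coindTrivRep k G M).asAlgebraHom a
                  (fun g => MonoidAlgebra.of k G g • m)) x
            rw [Pi.smul_apply]
            show MonoidAlgebra.of k G x • ((r • a) • m)
              = r • ((coindTrivRep k G M).asAlgebraHom a
                  (fun g => MonoidAlgebra.of k G g • m) x)
            rw [← hax]
            show MonoidAlgebra.of k G x • ((r • a) • m)
              = algebraMap k (MonoidAlgebra k G) r • (MonoidAlgebra.of k G x • (a • m))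
            rw [Algebra.smul_def r a, mul_smul, ← mul_smul, ← mul_smul,
              ← Algebra.commutes r (MonoidAlgebra.of k G x), mul_smul]
            exact mul_smul _ _ _ }
  have hι : Function.Injective ι := by
    intro m m' hmm
    have h1 : (MonoidAlgebra.of k G 1) • m = (MonoidAlgebra.of k G 1) • m' :=
      congrFun hmm 1
    rwa [map_one, one_smul, one_smul] at h1
  obtain ⟨p, hp⟩ := hM.out ι hι LinearMap.id
  -- restrict everything to the subgroup F
  letI := restrictToSubgroup k G F M
  letI := restrictToSubgroup k G F ((coindTrivRep k G M).asModule)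
  let i' : M →ₗ[MonoidAlgebra k F] (coindTrivRep k G M).asModule :=
    { toFun := fun m => ι m
      map_add' := fun m m' => ι.map_add m m'
      map_smul' := fun a m => by
        show ι ((subgroupInclusion k G F a) • m) = (subgroupInclusion k G F a) • ι m
        exact ι.map_smul _ m }
  let p' : (coindTrivRep k G M).asModule →ₗ[MonoidAlgebra k F] M :=
    { toFun := fun ψ => p ψ
      map_add' := fun ψ ψ' => p.map_add ψ ψ'
      map_smul' := fun a ψ => by
        show p ((subgroupInclusion k G F a) • ψ) = (subgroupInclusion k G F a) • p ψ
        exact p.map_smul _ ψ }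
  have hip : p'.comp i' = LinearMap.id := by
    ext m
    exact hp m
  -- projective dimension of the coinduced module
  haveI : Module.Free k (MonoidAlgebra k F) := Module.Free.of_basis (MonoidAlgebra.basis F k)
  haveI : Module.Flat k (MonoidAlgebra k F) := Module.Flat.of_free
  letI : Module k ((G ⧸ F) → M) := inferInstance
  have hN : HasProjDimLE k d ((G ⧸ F) → M) := hd _ _ _
  have hTP : HasProjDimLE (MonoidAlgebra k F) d
      ((MonoidAlgebra k F) ⊗[k] ((G ⧸ F) → M)) :=
    myPD_baseChange (MonoidAlgebra k F) d _ hN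
  obtain ⟨E⟩ := coindRestrictEquiv_nonempty k G F M
  have hH : HasProjDimLE (MonoidAlgebra k F) d ((coindTrivRep k G M).asModule) :=
    myPD_of_equiv d E hTP
  exact ⟨d, myPD_of_retract i' p' hip d hH⟩
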